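/- Let P₀, P₁, P₂, P₃ be mutually orthogonal projections on a complex separable Hilbert space H with P₀ + P₁ + P₂ + P₃ = I and P₂ ≠ 0, P₃ ≠ 0, and let 0 < λ, μ < 1 with λ ≠ μ. Set A = P₁ + λP₂ + μP₃. Then the greatest lower bound A ∧ (I − A) within the poset of effects exists if and only if either (λ ≤ 1/2 and μ ≤ 1/2) or (λ ≥ 1/2 and μ ≥ 1/2); in that case A ∧ (I − A) is the smaller of the two effects λP₂ + μP₃ and (1−λ)P₂ + (1−μ)P₃. -/

import Mathlib

open ContinuousLinearMap

variable {H : Type*} [NormedAddCommGroup H] [InnerProductSpace ℂ H] [CompleteSpace H]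

/-- `C` is the greatest lower bound of `A` and `B` within the poset of effects. -/
def IsGLBWithinEffects (A B C : H →L[ℂ] H) : Prop :=
  (0 ≤ C ∧ C ≤ 1) ∧ C ≤ A ∧ C ≤ B ∧
    ∀ D : H →L[ℂ] H, 0 ≤ D → D ≤ 1 → D ≤ A → D ≤ B → D ≤ C

local notation "⟪" x ", " y "⟫" => @inner ℂ _ _ x y



lemma sa_inner (T : H →L[ℂ] H) (hT : IsSelfAdjoint T) (a b : H) : ⟪T a, b⟫ = ⟪a, T b⟫ :=
  ((isSelfAdjoint_iff_isSymmetric).mp hT) a b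

lemma sa_of_symm (T : H →L[ℂ] H) (h : ∀ a b : H, ⟪T a, b⟫ = ⟪a, T b⟫) : IsSelfAdjoint T :=
  (isSelfAdjoint_iff_isSymmetric).mpr (fun a b => h a b)

lemma smul_sa (c : ℝ) (P : H →L[ℂ] H) (hP : IsSelfAdjoint P) : IsSelfAdjoint ((c:ℂ) • P) := by
  apply sa_of_symm
  intro a b
  simp only [smul_apply, inner_smul_left, inner_smul_right, Complex.conj_ofReal]
  rw [sa_inner P hP a b]

lemma proj_inner (P : H →L[ℂ] H) (h1 : IsSelfAdjoint P) (h2 : P * P = P) (x : H) :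
    ⟪P x, x⟫ = (‖P x‖^2 : ℝ) := by
  have key : ⟪P x, x⟫ = ⟪P x, P x⟫ := by
    conv_lhs => rw [← h2, ContinuousLinearMap.mul_apply]
    exact sa_inner P h1 (P x) x
  rw [key, inner_self_eq_norm_sq_to_K]
  norm_cast

lemma le_of_re (f g : H →L[ℂ] H) (hsa : IsSelfAdjoint (g - f))
    (h : ∀ x, (⟪f x, x⟫).re ≤ (⟪g x, x⟫).re) : f ≤ g := by
  refine ⟨isSelfAdjoint_iff_isSymmetric.mp hsa, fun x => ?_⟩
  have h2 : reApplyInnerSelf (g - f) x = (⟪g x, x⟫).re - (⟪f x, x⟫).re := by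
    simp [reApplyInnerSelf, sub_apply, inner_sub_left]
  rw [h2]
  linarith [h x]

lemma re_le_of_le {f g : H →L[ℂ] H} (h : f ≤ g) (x : H) :
    (⟪f x, x⟫).re ≤ (⟪g x, x⟫).re := by
  have h2 := h.2 x
  simp [reApplyInnerSelf, sub_apply, inner_sub_left] at h2
  linarith

lemma sa_of_nonneg {f : H →L[ℂ] H} (h : (0 : H →L[ℂ] H) ≤ f) : IsSelfAdjoint f := by
  have h2 := h.1; exact isSelfAdjoint_iff_isSymmetric.mpr (by simpa using h2)

lemma re_nonneg_of_nonneg {f : H →L[ℂ] H} (h : (0 : H →L[ℂ] H) ≤ f) (x : H) :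
    0 ≤ (⟪f x, x⟫).re := by
  have := re_le_of_le h x
  simpa using this

lemma orth_rev {P Q : H →L[ℂ] H} (hP : IsSelfAdjoint P) (hQ : IsSelfAdjoint Q)
    (h : P * Q = 0) : Q * P = 0 := by
  have h2 := congrArg star h
  rwa [star_mul, hP.star_eq, hQ.star_eq, star_zero] at h2

lemma Kzero (C : H →L[ℂ] H) (hsa : IsSelfAdjoint C) (hpos : ∀ x, 0 ≤ (⟪C x, x⟫).re)
    (x : H) (hx : (⟪C x, x⟫).re = 0) : C x = 0 := by
  by_contra hne
  have hr : 0 < ‖C x‖^2 := by have h5 : 0 < ‖C x‖ := norm_pos_iff.mpr hne; positivity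
  set r : ℝ := ‖C x‖^2 with hrdef
  set M : ℝ := (⟪C (C x), C x⟫).re with hMdef
  have hM : 0 ≤ M := hpos (C x)
  have expand : ∀ t : ℝ, 0 ≤ 2*t*r + t^2 * M := by
    intro t
    have h0 := hpos (x + (t:ℂ) • C x)
    have hexp : ⟪C (x + (t:ℂ) • C x), x + (t:ℂ) • C x⟫
        = ⟪C x, x⟫ + (t:ℂ) * ⟪C x, C x⟫ + (t:ℂ) * ⟪C (C x), x⟫
          + (t:ℂ)^2 * ⟪C (C x), C x⟫ := by
      rw [map_add, map_smul]
      simp only [inner_add_left, inner_add_right, inner_smul_left, inner_smul_right,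
        Complex.conj_ofReal]
      ring
    have hCxy : ⟪C x, C x⟫ = ((r:ℝ) : ℂ) := by
      rw [inner_self_eq_norm_sq_to_K, hrdef]; norm_cast
    have hCyx : ⟪C (C x), x⟫ = ((r:ℝ) : ℂ) := by
      rw [sa_inner C hsa (C x) x, ← hCxy]
    rw [hexp, hCxy, hCyx] at h0
    have hre : (⟪C x, x⟫ + (t:ℂ) * (r:ℂ) + (t:ℂ) * (r:ℂ) + (t:ℂ)^2 * ⟪C (C x), C x⟫).re
        = (⟪C x, x⟫).re + t*r + t*r + t^2 * M := by
      have e2 : (t:ℂ) * (r:ℂ) = ((t*r : ℝ) : ℂ) := by push_cast; ring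
      have e3 : ((t:ℂ)^2 * ⟪C (C x), C x⟫).re = t^2 * M := by
        have e4 : (t:ℂ)^2 = ((t^2 : ℝ) : ℂ) := by push_cast; ring
        rw [e4, Complex.re_ofReal_mul, hMdef]
      simp only [Complex.add_re, e2, e3, Complex.ofReal_re]
    rw [hre, hx] at h0
    linarith
  have hM1 : (0:ℝ) < M + 1 := by linarith
  have h0 := expand (-(r/(M+1)))
  have e1 : (-(r/(M+1))) * (M+1) = -r := by field_simp
  nlinarith [h0, e1, hr, hM, sq_nonneg r]

structure MySetup (P₀ P₁ P₂ P₃ : H →L[ℂ] H) : Prop where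
  s0 : IsSelfAdjoint P₀
  i0 : P₀ * P₀ = P₀
  s1 : IsSelfAdjoint P₁
  i1 : P₁ * P₁ = P₁
  s2 : IsSelfAdjoint P₂
  i2 : P₂ * P₂ = P₂
  s3 : IsSelfAdjoint P₃
  i3 : P₃ * P₃ = P₃
  o01 : P₀ * P₁ = 0
  o02 : P₀ * P₂ = 0
  o03 : P₀ * P₃ = 0
  o10 : P₁ * P₀ = 0
  o12 : P₁ * P₂ = 0
  o13 : P₁ * P₃ = 0
  o20 : P₂ * P₀ = 0
  o21 : P₂ * P₁ = 0
  o23 : P₂ * P₃ = 0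
  o30 : P₃ * P₀ = 0
  o31 : P₃ * P₁ = 0
  o32 : P₃ * P₂ = 0
  hsum : P₀ + P₁ + P₂ + P₃ = 1


lemma mul_apply_zero {P Q : H →L[ℂ] H} (h : P * Q = 0) (x : H) : P (Q x) = 0 := by
  have h2 := congrArg (fun T : H →L[ℂ] H => T x) h
  simpa [mul_apply] using h2

lemma idem_apply {P : H →L[ℂ] H} (h : P * P = P) (x : H) : P (P x) = P x := by
  have h2 := congrArg (fun T : H →L[ℂ] H => T x) h
  simpa [mul_apply] using h2

namespace MySetup

variable {P₀ P₁ P₂ P₃ : H →L[ℂ] H}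

lemma apply_sum (h : MySetup P₀ P₁ P₂ P₃) (x : H) : P₀ x + P₁ x + P₂ x + P₃ x = x := by
  have h2 := congrArg (fun T : H →L[ℂ] H => T x) h.hsum
  simpa [add_apply] using h2

lemma inner_one (h : MySetup P₀ P₁ P₂ P₃) (x : H) :
    ⟪(1 : H →L[ℂ] H) x, x⟫ = ((‖P₀ x‖^2 + ‖P₁ x‖^2 + ‖P₂ x‖^2 + ‖P₃ x‖^2 : ℝ) : ℂ) := by
  have hx := h.apply_sum x
  have e1 : ⟪(1 : H →L[ℂ] H) x, x⟫ = ⟪P₀ x + P₁ x + P₂ x + P₃ x, x⟫ := by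
    rw [ContinuousLinearMap.one_apply]
    exact (congrArg (fun z : H => (inner ℂ z x : ℂ)) hx).symm
  rw [e1]
  simp only [inner_add_left, proj_inner P₀ h.s0 h.i0, proj_inner P₁ h.s1 h.i1,
    proj_inner P₂ h.s2 h.i2, proj_inner P₃ h.s3 h.i3]
  push_cast
  ring

lemma inner_combo (h : MySetup P₀ P₁ P₂ P₃) (c₂ c₃ : ℝ) (x : H) :
    ⟪((c₂:ℂ) • P₂ + (c₃:ℂ) • P₃) x, x⟫ = ((c₂ * ‖P₂ x‖^2 + c₃ * ‖P₃ x‖^2 : ℝ) : ℂ) := by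
  simp only [add_apply, smul_apply, inner_add_left, inner_smul_left, Complex.conj_ofReal,
    proj_inner P₂ h.s2 h.i2, proj_inner P₃ h.s3 h.i3]
  push_cast
  ring

lemma inner_A (h : MySetup P₀ P₁ P₂ P₃) {lam mu : ℝ} {A : H →L[ℂ] H}
    (hA : A = P₁ + (lam:ℂ) • P₂ + (mu:ℂ) • P₃) (x : H) :
    ⟪A x, x⟫ = ((‖P₁ x‖^2 + lam * ‖P₂ x‖^2 + mu * ‖P₃ x‖^2 : ℝ) : ℂ) := by
  subst hA
  simp only [add_apply, smul_apply, inner_add_left, inner_smul_left, Complex.conj_ofReal,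
    proj_inner P₁ h.s1 h.i1, proj_inner P₂ h.s2 h.i2, proj_inner P₃ h.s3 h.i3]
  push_cast
  ring

lemma re_one (h : MySetup P₀ P₁ P₂ P₃) (x : H) :
    (⟪(1 : H →L[ℂ] H) x, x⟫).re = ‖P₀ x‖^2 + ‖P₁ x‖^2 + ‖P₂ x‖^2 + ‖P₃ x‖^2 := by
  rw [h.inner_one x, Complex.ofReal_re]

lemma re_combo (h : MySetup P₀ P₁ P₂ P₃) (c₂ c₃ : ℝ) (x : H) :
    (⟪((c₂:ℂ) • P₂ + (c₃:ℂ) • P₃) x, x⟫).re = c₂ * ‖P₂ x‖^2 + c₃ * ‖P₃ x‖^2 := by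
  rw [h.inner_combo c₂ c₃ x, Complex.ofReal_re]

lemma re_A (h : MySetup P₀ P₁ P₂ P₃) {lam mu : ℝ} {A : H →L[ℂ] H}
    (hA : A = P₁ + (lam:ℂ) • P₂ + (mu:ℂ) • P₃) (x : H) :
    (⟪A x, x⟫).re = ‖P₁ x‖^2 + lam * ‖P₂ x‖^2 + mu * ‖P₃ x‖^2 := by
  rw [h.inner_A hA x, Complex.ofReal_re]

lemma sa_combo (h : MySetup P₀ P₁ P₂ P₃) (c₂ c₃ : ℝ) :
    IsSelfAdjoint ((c₂:ℂ) • P₂ + (c₃:ℂ) • P₃) :=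
  (smul_sa c₂ P₂ h.s2).add (smul_sa c₃ P₃ h.s3)

lemma sa_A (h : MySetup P₀ P₁ P₂ P₃) {lam mu : ℝ} {A : H →L[ℂ] H}
    (hA : A = P₁ + (lam:ℂ) • P₂ + (mu:ℂ) • P₃) : IsSelfAdjoint A := by
  subst hA
  exact (h.s1.add (smul_sa lam P₂ h.s2)).add (smul_sa mu P₃ h.s3)

end MySetup

lemma re_sub_inner (f g : H →L[ℂ] H) (x : H) :
    (⟪(f - g) x, x⟫).re = (⟪f x, x⟫).re - (⟪g x, x⟫).re := by
  simp [sub_apply, inner_sub_left]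

lemma aux_compress {P₀ P₁ P₂ P₃ : H →L[ℂ] H} (h : MySetup P₀ P₁ P₂ P₃)
    {lam mu : ℝ} {A : H →L[ℂ] H} (hA : A = P₁ + (lam:ℂ) • P₂ + (mu:ℂ) • P₃)
    {D : H →L[ℂ] H} (hD0 : (0 : H →L[ℂ] H) ≤ D) (hDA : D ≤ A) (hDB : D ≤ 1 - A) :
    D ≤ (lam:ℂ) • P₂ + (mu:ℂ) • P₃ ∧
      D ≤ ((1 - lam : ℝ):ℂ) • P₂ + ((1 - mu : ℝ):ℂ) • P₃ := by
  have hsaD : IsSelfAdjoint D := sa_of_nonneg hD0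
  have hDpos : ∀ x, 0 ≤ (⟪D x, x⟫).re := re_nonneg_of_nonneg hD0
  -- A (P₀ x) = 0
  have hAP0 : ∀ x, A (P₀ x) = 0 := by
    intro x
    rw [hA]
    simp [add_apply, smul_apply, mul_apply_zero h.o10, mul_apply_zero h.o20,
      mul_apply_zero h.o30]
  have hDP0 : ∀ x, D (P₀ x) = 0 := by
    intro x
    apply Kzero D hsaD hDpos
    have h1 := re_le_of_le hDA (P₀ x)
    rw [hAP0 x] at h1
    simp only [inner_zero_left, Complex.zero_re] at h1
    exact le_antisymm h1 (hDpos (P₀ x))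
  -- (1-A) (P₁ x) = 0
  have hBP1 : ∀ x, (1 - A) (P₁ x) = 0 := by
    intro x
    rw [sub_apply, ContinuousLinearMap.one_apply, hA]
    simp [add_apply, smul_apply, idem_apply h.i1, mul_apply_zero h.o21,
      mul_apply_zero h.o31]
  have hDP1 : ∀ x, D (P₁ x) = 0 := by
    intro x
    apply Kzero D hsaD hDpos
    have h1 := re_le_of_le hDB (P₁ x)
    rw [hBP1 x] at h1
    simp only [inner_zero_left, Complex.zero_re] at h1
    exact le_antisymm h1 (hDpos (P₁ x))
  -- reduction to w = P₂ x + P₃ x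
  have key : ∀ x, (⟪D x, x⟫).re = (⟪D (P₂ x + P₃ x), P₂ x + P₃ x⟫).re ∧
      ‖P₂ (P₂ x + P₃ x)‖ = ‖P₂ x‖ ∧ ‖P₃ (P₂ x + P₃ x)‖ = ‖P₃ x‖ ∧
      P₁ (P₂ x + P₃ x) = 0 ∧ P₀ (P₂ x + P₃ x) = 0 := by
    intro x
    have hx := h.apply_sum x
    have hDw : D x = D (P₂ x + P₃ x) := by
      conv_lhs => rw [← hx]
      simp [map_add, hDP0, hDP1]
    have hiw : ⟪D x, x⟫ = ⟪D (P₂ x + P₃ x), P₂ x + P₃ x⟫ := by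
      have e0 : ⟪D (P₂ x + P₃ x), x⟫ = ⟪D (P₂ x + P₃ x), P₀ x + P₁ x + P₂ x + P₃ x⟫ :=
        (congrArg (fun z : H => (inner ℂ (D (P₂ x + P₃ x)) z : ℂ)) hx).symm
      rw [hDw, e0]
      simp only [inner_add_right]
      rw [sa_inner D hsaD (P₂ x + P₃ x) (P₀ x), sa_inner D hsaD (P₂ x + P₃ x) (P₁ x),
        hDP0, hDP1]
      simp [inner_add_right]
    refine ⟨by rw [hiw], ?_, ?_, ?_, ?_⟩
    · rw [map_add, idem_apply h.i2, mul_apply_zero h.o23, add_zero]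
    · rw [map_add, idem_apply h.i3, mul_apply_zero h.o32, zero_add]
    · rw [map_add, mul_apply_zero h.o12, mul_apply_zero h.o13, add_zero]
    · rw [map_add, mul_apply_zero h.o02, mul_apply_zero h.o03, add_zero]
  constructor
  · apply le_of_re _ _ ((h.sa_combo lam mu).sub hsaD)
    intro x
    obtain ⟨e1, e2, e3, e4, e5⟩ := key x
    rw [e1, h.re_combo]
    have h1 := re_le_of_le hDA (P₂ x + P₃ x)
    rw [h.re_A hA] at h1
    rw [e2, e3, e4] at h1
    simpa using h1
  · apply le_of_re _ _ ((h.sa_combo (1-lam) (1-mu)).sub hsaD)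
    intro x
    obtain ⟨e1, e2, e3, e4, e5⟩ := key x
    rw [e1, h.re_combo]
    have h1 := re_le_of_le hDB (P₂ x + P₃ x)
    rw [re_sub_inner, h.re_one, h.re_A hA] at h1
    rw [e2, e3, e4, e5] at h1
    simp only [norm_zero] at h1 ⊢
    nlinarith [h1]

lemma aux_exists {P₀ P₁ P₂ P₃ : H →L[ℂ] H} (h : MySetup P₀ P₁ P₂ P₃)
    {lam mu : ℝ} (hl0 : 0 < lam) (hl2 : lam ≤ 1/2) (hm0 : 0 < mu) (hm2 : mu ≤ 1/2)
    {A : H →L[ℂ] H} (hA : A = P₁ + (lam:ℂ) • P₂ + (mu:ℂ) • P₃) :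
    IsGLBWithinEffects A (1 - A) ((lam:ℂ) • P₂ + (mu:ℂ) • P₃) := by
  set C := (lam:ℂ) • P₂ + (mu:ℂ) • P₃ with hC
  have hsaC : IsSelfAdjoint C := h.sa_combo lam mu
  have hsaA : IsSelfAdjoint A := h.sa_A hA
  have hC0 : (0 : H →L[ℂ] H) ≤ C := by
    apply le_of_re _ _ (by simpa using hsaC)
    intro x
    rw [h.re_combo lam mu x]
    simp only [zero_apply, inner_zero_left, Complex.zero_re]
    nlinarith [sq_nonneg ‖P₂ x‖, sq_nonneg ‖P₃ x‖]
  have hC1 : C ≤ 1 := by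
    apply le_of_re _ _ ((IsSelfAdjoint.one (H →L[ℂ] H)).sub hsaC)
    intro x
    rw [h.re_combo lam mu x, h.re_one x]
    nlinarith [sq_nonneg ‖P₀ x‖, sq_nonneg ‖P₁ x‖, sq_nonneg ‖P₂ x‖, sq_nonneg ‖P₃ x‖]
  have hCA : C ≤ A := by
    apply le_of_re _ _ (hsaA.sub hsaC)
    intro x
    rw [h.re_combo lam mu x, h.re_A hA x]
    nlinarith [sq_nonneg ‖P₁ x‖]
  have hCB : C ≤ 1 - A := by
    apply le_of_re _ _ (((IsSelfAdjoint.one (H →L[ℂ] H)).sub hsaA).sub hsaC)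
    intro x
    rw [h.re_combo lam mu x, re_sub_inner, h.re_one x, h.re_A hA x]
    nlinarith [sq_nonneg ‖P₀ x‖, sq_nonneg ‖P₂ x‖, sq_nonneg ‖P₃ x‖]
  exact ⟨⟨hC0, hC1⟩, hCA, hCB, fun D hD0 _ hDA hDB => (aux_compress h hA hD0 hDA hDB).1⟩

set_option maxHeartbeats 2000000 in
lemma aux_nonexist {P₀ P₁ P₂ P₃ : H →L[ℂ] H} (h : MySetup P₀ P₁ P₂ P₃)
    (hP₂ : P₂ ≠ 0) (hP₃ : P₃ ≠ 0)
    {lam mu : ℝ} (hl0 : 0 < lam) (hm1 : mu < 1) (hl2 : lam < 1/2) (hm2 : 1/2 < mu)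
    {A : H →L[ℂ] H} (hA : A = P₁ + (lam:ℂ) • P₂ + (mu:ℂ) • P₃) :
    ¬ ∃ C : H →L[ℂ] H, IsGLBWithinEffects A (1 - A) C := by
  rintro ⟨C, ⟨⟨hC0, hC1⟩, hCA, hCB, hglb⟩⟩
  have hsaA : IsSelfAdjoint A := h.sa_A hA
  have hsaC : IsSelfAdjoint C := sa_of_nonneg hC0
  -- C is squeezed
  obtain ⟨hCM1, hCM2⟩ := aux_compress h hA hC0 hCA hCB
  -- D₁ is a lower bound
  set D₁ : H →L[ℂ] H := (lam:ℂ) • P₂ + ((1 - mu : ℝ):ℂ) • P₃ with hD₁def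
  have hsaD₁ : IsSelfAdjoint D₁ := h.sa_combo lam (1-mu)
  have hD₁0 : (0:H →L[ℂ] H) ≤ D₁ := by
    apply le_of_re _ _ (by simpa using hsaD₁)
    intro x
    rw [h.re_combo lam (1-mu) x]
    simp only [zero_apply, inner_zero_left, Complex.zero_re]
    nlinarith [sq_nonneg ‖P₂ x‖, sq_nonneg ‖P₃ x‖]
  have hD₁1 : D₁ ≤ 1 := by
    apply le_of_re _ _ ((IsSelfAdjoint.one (H →L[ℂ] H)).sub hsaD₁)
    intro x
    rw [h.re_combo lam (1-mu) x, h.re_one x]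
    nlinarith [sq_nonneg ‖P₀ x‖, sq_nonneg ‖P₁ x‖, sq_nonneg ‖P₂ x‖, sq_nonneg ‖P₃ x‖]
  have hD₁A : D₁ ≤ A := by
    apply le_of_re _ _ (hsaA.sub hsaD₁)
    intro x
    rw [h.re_combo lam (1-mu) x, h.re_A hA x]
    nlinarith [sq_nonneg ‖P₁ x‖, sq_nonneg ‖P₃ x‖]
  have hD₁B : D₁ ≤ 1 - A := by
    apply le_of_re _ _ (((IsSelfAdjoint.one (H →L[ℂ] H)).sub hsaA).sub hsaD₁)
    intro x
    rw [h.re_combo lam (1-mu) x, re_sub_inner, h.re_one x, h.re_A hA x]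
    nlinarith [sq_nonneg ‖P₀ x‖, sq_nonneg ‖P₂ x‖]
  have hD₁C : D₁ ≤ C := hglb D₁ hD₁0 hD₁1 hD₁A hD₁B
  -- C = D₁
  have hE0 : (0:H →L[ℂ] H) ≤ C - D₁ := by simpa using hD₁C
  have hsaE : IsSelfAdjoint (C - D₁) := hsaC.sub hsaD₁
  have hEpos : ∀ x, 0 ≤ (⟪(C - D₁) x, x⟫).re := re_nonneg_of_nonneg hE0
  have hEP : ∀ x, (C - D₁) x = 0 := by
    intro x
    have key : ∀ y : H, (⟪(C - D₁) y, y⟫).re ≤ (2*mu-1) * ‖P₃ y‖^2 ∧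
        (⟪(C - D₁) y, y⟫).re ≤ (1-2*lam) * ‖P₂ y‖^2 := by
      intro y
      have k1 := re_le_of_le hCM1 y
      have k2 := re_le_of_le hCM2 y
      have k3 : (⟪D₁ y, y⟫).re = lam * ‖P₂ y‖^2 + (1-mu) * ‖P₃ y‖^2 := h.re_combo lam (1-mu) y
      rw [h.re_combo lam mu y] at k1
      rw [h.re_combo (1-lam) (1-mu) y] at k2
      rw [re_sub_inner, k3]
      constructor <;> nlinarith [k1, k2]
    have z0 : (C - D₁) (P₀ x) = 0 := by
      apply Kzero _ hsaE hEpos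
      have := (key (P₀ x)).1
      rw [mul_apply_zero h.o30 x] at this
      simp only [norm_zero] at this
      nlinarith [hEpos (P₀ x), this]
    have z1 : (C - D₁) (P₁ x) = 0 := by
      apply Kzero _ hsaE hEpos
      have := (key (P₁ x)).1
      rw [mul_apply_zero h.o31 x] at this
      simp only [norm_zero] at this
      nlinarith [hEpos (P₁ x), this]
    have z2 : (C - D₁) (P₂ x) = 0 := by
      apply Kzero _ hsaE hEpos
      have := (key (P₂ x)).1
      rw [mul_apply_zero h.o32 x] at this
      simp only [norm_zero] at this
      nlinarith [hEpos (P₂ x), this]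
    have z3 : (C - D₁) (P₃ x) = 0 := by
      apply Kzero _ hsaE hEpos
      have := (key (P₃ x)).2
      rw [mul_apply_zero h.o23 x] at this
      simp only [norm_zero] at this
      nlinarith [hEpos (P₃ x), this]
    have hx := h.apply_sum x
    calc (C - D₁) x = (C - D₁) (P₀ x + P₁ x + P₂ x + P₃ x) := by rw [hx]
    _ = 0 := by rw [map_add, map_add, map_add, z0, z1, z2, z3]; simp
  have hCD₁ : C = D₁ := by
    apply ContinuousLinearMap.ext
    intro x
    have h5 := hEP x
    rw [sub_apply, sub_eq_zero] at h5
    exact h5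
    -- (continuing aux_nonexist) rank-one perturbation
  have hm0 : (0:ℝ) < mu := by linarith
  have hl1 : lam < 1 := by linarith
  have hml : (0:ℝ) < mu - lam := by linarith
  set s : ℝ := (1-2*lam)*(1-mu)/(mu-lam) with hsdef
  have hsv : s*(mu-lam) = (1-2*lam)*(1-mu) := div_mul_cancel₀ _ hml.ne'
  have hs0 : 0 < s := div_pos (by nlinarith) hml
  have hs1 : s ≤ 1 := by rw [hsdef, div_le_one hml]; nlinarith
  set α : ℝ := Real.sqrt (lam*(1-s)) with hαdef
  set β : ℝ := Real.sqrt (mu*s) with hβdef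
  have hα2 : α^2 = lam*(1-s) := Real.sq_sqrt (by nlinarith)
  have hβ2 : β^2 = mu*s := Real.sq_sqrt (by positivity)
  have hα0 : 0 ≤ α := Real.sqrt_nonneg _
  have hβ0 : 0 ≤ β := Real.sqrt_nonneg _
  -- unit vectors
  obtain ⟨u, hu⟩ : ∃ u, P₂ u ≠ 0 := by
    by_contra hcon; push_neg at hcon
    exact hP₂ (ContinuousLinearMap.ext fun u => by simp [hcon u])
  obtain ⟨v, hv⟩ : ∃ v, P₃ v ≠ 0 := by
    by_contra hcon; push_neg at hcon
    exact hP₃ (ContinuousLinearMap.ext fun v => by simp [hcon v])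
  have hnu : ‖P₂ u‖ ≠ 0 := norm_ne_zero_iff.mpr hu
  have hnv : ‖P₃ v‖ ≠ 0 := norm_ne_zero_iff.mpr hv
  obtain ⟨e, hee, hP2e, hP3e⟩ : ∃ e : H, ‖e‖ = 1 ∧ P₂ e = e ∧ P₃ e = 0 := by
    refine ⟨((‖P₂ u‖⁻¹ : ℝ):ℂ) • P₂ u, ?_, ?_, ?_⟩
    · rw [norm_smul, Complex.norm_real, Real.norm_eq_abs, abs_inv, abs_norm]
      field_simp
    · rw [map_smul, idem_apply h.i2]
    · rw [map_smul, mul_apply_zero h.o32]; simp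
  obtain ⟨f, hff, hP3f, hP2f⟩ : ∃ f : H, ‖f‖ = 1 ∧ P₃ f = f ∧ P₂ f = 0 := by
    refine ⟨((‖P₃ v‖⁻¹ : ℝ):ℂ) • P₃ v, ?_, ?_, ?_⟩
    · rw [norm_smul, Complex.norm_real, Real.norm_eq_abs, abs_inv, abs_norm]
      field_simp
    · rw [map_smul, idem_apply h.i3]
    · rw [map_smul, mul_apply_zero h.o23]; simp
  have hie : ⟪e, e⟫ = 1 := by
    rw [inner_self_eq_norm_sq_to_K, hee]; norm_num
  have hif : ⟪f, f⟫ = 1 := by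
    rw [inner_self_eq_norm_sq_to_K, hff]; norm_num
  have hef : ⟪e, f⟫ = 0 := by
    calc ⟪e, f⟫ = ⟪P₂ e, f⟫ := by rw [hP2e]
    _ = ⟪e, P₂ f⟫ := sa_inner P₂ h.s2 e f
    _ = 0 := by rw [hP2f, inner_zero_right]
  have hfe : ⟪f, e⟫ = 0 := by
    calc ⟪f, e⟫ = ⟪P₃ f, e⟫ := by rw [hP3f]
    _ = ⟪f, P₃ e⟫ := sa_inner P₃ h.s3 f e
    _ = 0 := by rw [hP3e, inner_zero_right]
  -- the rank one operator
  obtain ⟨g, hgdef⟩ : ∃ g : H, g = (α:ℂ) • e + (β:ℂ) • f := ⟨_, rfl⟩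
  obtain ⟨D, hDdef⟩ : ∃ D : H →L[ℂ] H, D = (innerSL ℂ g).smulRight g := ⟨_, rfl⟩
  have hDapp : ∀ x, D x = ⟪g, x⟫ • g := fun x => by
    rw [hDdef]; simp [ContinuousLinearMap.smulRight_apply]
  have hsaD : IsSelfAdjoint D := by
    apply sa_of_symm
    intro a b
    rw [hDapp a, hDapp b, inner_smul_left, inner_smul_right, ← inner_conj_symm a g]
    ring
  have hreD : ∀ x, (⟪D x, x⟫).re = ‖(⟪g, x⟫ : ℂ)‖^2 := by
    intro x
    rw [hDapp x, inner_smul_left]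
    have h1 : (starRingEnd ℂ) ⟪g, x⟫ * ⟪g, x⟫ = ((Complex.normSq ⟪g, x⟫ : ℝ) : ℂ) := by
      rw [mul_comm, Complex.mul_conj]
    rw [h1, Complex.ofReal_re, ← Complex.sq_norm]
  have hgx : ∀ x, ⟪g, x⟫ = (α:ℂ)*⟪e, P₂ x⟫ + (β:ℂ)*⟪f, P₃ x⟫ := by
    intro x
    have e1 : (⟪e, x⟫ : ℂ) = ⟪e, P₂ x⟫ := by
      conv_lhs => rw [← hP2e]
      exact sa_inner P₂ h.s2 e x
    have e2 : (⟪f, x⟫ : ℂ) = ⟪f, P₃ x⟫ := by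
      conv_lhs => rw [← hP3f]
      exact sa_inner P₃ h.s3 f x
    rw [hgdef, inner_add_left, inner_smul_left, inner_smul_left, Complex.conj_ofReal,
      Complex.conj_ofReal, e1, e2]
  have hgbnd : ∀ x, ‖(⟪g, x⟫ : ℂ)‖ ≤ α*‖P₂ x‖ + β*‖P₃ x‖ := by
    intro x
    rw [hgx x]
    refine (norm_add_le _ _).trans ?_
    rw [norm_mul, norm_mul, Complex.norm_real α, Complex.norm_real β,
      Real.norm_eq_abs α, Real.norm_eq_abs β, abs_of_nonneg hα0, abs_of_nonneg hβ0]
    gcongr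
    · calc ‖(⟪e, P₂ x⟫ : ℂ)‖ ≤ ‖e‖ * ‖P₂ x‖ := norm_inner_le_norm e (P₂ x)
      _ = ‖P₂ x‖ := by rw [hee, one_mul]
    · calc ‖(⟪f, P₃ x⟫ : ℂ)‖ ≤ ‖f‖ * ‖P₃ x‖ := norm_inner_le_norm f (P₃ x)
      _ = ‖P₃ x‖ := by rw [hff, one_mul]
  have hD0 : (0:H →L[ℂ] H) ≤ D := by
    apply le_of_re _ _ (by simpa using hsaD)
    intro x
    rw [hreD x]
    simp only [zero_apply, inner_zero_left, Complex.zero_re]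
    positivity
  have hDA : D ≤ A := by
    apply le_of_re _ _ (hsaA.sub hsaD)
    intro x
    rw [hreD x, h.re_A hA x]
    have hb := hgbnd x
    have h2 : ‖(⟪g, x⟫ : ℂ)‖^2 ≤ (α*‖P₂ x‖ + β*‖P₃ x‖)^2 :=
      pow_le_pow_left₀ (norm_nonneg _) hb 2
    have key : lam*mu*((lam*‖P₂ x‖^2 + mu*‖P₃ x‖^2) - (α*‖P₂ x‖ + β*‖P₃ x‖)^2)
        = (mu*α*‖P₃ x‖ - lam*β*‖P₂ x‖)^2 := by
      linear_combination (-(lam*mu*‖P₂ x‖^2) - mu^2*‖P₃ x‖^2) * hα2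
        + (-(lam*mu*‖P₃ x‖^2) - lam^2*‖P₂ x‖^2) * hβ2
    nlinarith [key, sq_nonneg (mu*α*‖P₃ x‖ - lam*β*‖P₂ x‖), h2, mul_pos hl0 hm0,
      sq_nonneg ‖P₁ x‖]
  have hDB : D ≤ 1 - A := by
    apply le_of_re _ _ (((IsSelfAdjoint.one (H →L[ℂ] H)).sub hsaA).sub hsaD)
    intro x
    rw [hreD x, re_sub_inner, h.re_one x, h.re_A hA x]
    have hb := hgbnd x
    have h2 : ‖(⟪g, x⟫ : ℂ)‖^2 ≤ (α*‖P₂ x‖ + β*‖P₃ x‖)^2 :=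
      pow_le_pow_left₀ (norm_nonneg _) hb 2
    have key : (1-lam)*(1-mu)*(((1-lam)*‖P₂ x‖^2 + (1-mu)*‖P₃ x‖^2)
          - (α*‖P₂ x‖ + β*‖P₃ x‖)^2)
        = ((1-mu)*α*‖P₃ x‖ - (1-lam)*β*‖P₂ x‖)^2 := by
      linear_combination (-((1-lam)*(1-mu)*‖P₂ x‖^2) - (1-mu)^2*‖P₃ x‖^2) * hα2
        + (-((1-lam)*(1-mu)*‖P₃ x‖^2) - (1-lam)^2*‖P₂ x‖^2) * hβ2
        + (-((1-lam)*‖P₂ x‖^2) - (1-mu)*‖P₃ x‖^2) * hsv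
    nlinarith [key, sq_nonneg ((1-mu)*α*‖P₃ x‖ - (1-lam)*β*‖P₂ x‖), h2,
      mul_pos (by linarith : (0:ℝ) < 1-lam) (by linarith : (0:ℝ) < 1-mu),
      sq_nonneg ‖P₀ x‖]
  have hA1 : A ≤ 1 := by
    apply le_of_re _ _ ((IsSelfAdjoint.one (H →L[ℂ] H)).sub hsaA)
    intro x
    rw [h.re_A hA x, h.re_one x]
    nlinarith [sq_nonneg ‖P₀ x‖, sq_nonneg ‖P₂ x‖, sq_nonneg ‖P₃ x‖]
  have hDC : D ≤ C := hglb D hD0 (hDA.trans hA1) hDA hDB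
  -- witness vector
  obtain ⟨w, hwdef⟩ : ∃ w : H, w = ((-(α*β) : ℝ):ℂ) • e + ((-(lam*s) : ℝ):ℂ) • f := ⟨_, rfl⟩
  have hP2w : P₂ w = ((-(α*β) : ℝ):ℂ) • e := by
    rw [hwdef, map_add, map_smul, map_smul, hP2e, hP2f, smul_zero, add_zero]
  have hP3w : P₃ w = ((-(lam*s) : ℝ):ℂ) • f := by
    rw [hwdef, map_add, map_smul, map_smul, hP3e, hP3f, smul_zero, zero_add]
  have hnP2w : ‖P₂ w‖^2 = (α*β)^2 := by
    rw [hP2w, norm_smul, Complex.norm_real, Real.norm_eq_abs, hee, mul_one, abs_neg, sq_abs]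
  have hnP3w : ‖P₃ w‖^2 = (lam*s)^2 := by
    rw [hP3w, norm_smul, Complex.norm_real, Real.norm_eq_abs, hff, mul_one, abs_neg, sq_abs]
  have hreCw : (⟪C w, w⟫).re = lam*(α*β)^2 + (1-mu)*(lam*s)^2 := by
    rw [hCD₁, h.re_combo lam (1-mu) w, hnP2w, hnP3w]
  have hgw : (⟪g, w⟫ : ℂ) = ((-(α^2*β) - β*(lam*s) : ℝ):ℂ) := by
    rw [hgx w, hP2w, hP3w, inner_smul_right, inner_smul_right, hie, hif]
    push_cast
    ring
  have hreDw : (⟪D w, w⟫).re = (α^2*β + β*(lam*s))^2 := by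
    rw [hreD w, hgw, Complex.norm_real, Real.norm_eq_abs, sq_abs]
    ring
  have hle := re_le_of_le hDC w
  rw [hreDw, hreCw] at hle
  -- final contradiction
  have e10 : (α^2*β + β*(lam*s))^2 = mu*s*lam^2 := by
    linear_combination ((α^2+lam*s)^2) * hβ2 + (mu*s*(α^2+lam*s+lam)) * hα2
  have e11 : lam*(α*β)^2 + (1-mu)*(lam*s)^2 = lam^2*mu*s*(1-s) + (1-mu)*lam^2*s^2 := by
    linear_combination (lam*β^2) * hα2 + (lam^2*(1-s)) * hβ2
  rw [e10, e11] at hle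
  nlinarith [hle, mul_pos (mul_pos hl0 hl0) (mul_pos hs0 hs0), hm2]

lemma glb_comm {A B C : H →L[ℂ] H} (h : IsGLBWithinEffects A B C) :
    IsGLBWithinEffects B A C :=
  ⟨h.1, h.2.2.1, h.2.1, fun D a b c d => h.2.2.2 D a b d c⟩

set_option maxHeartbeats 2000000 in
/-- for `A = P₁ + λP₂ + μP₃` built from four mutually orthogonal
projections summing to the identity, `A ∧ (I - A)` exists within the effects iff
`λ, μ` lie on the same side of `1/2`, and then it equals the smaller of
`λP₂ + μP₃` and `(1-λ)P₂ + (1-μ)P₃`. -/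
theorem effect_four_projections_inf_complement
    [TopologicalSpace.SeparableSpace H]
    (P₀ P₁ P₂ P₃ : H →L[ℂ] H)
    (h₀ : IsSelfAdjoint P₀ ∧ P₀ * P₀ = P₀) (h₁ : IsSelfAdjoint P₁ ∧ P₁ * P₁ = P₁)
    (h₂ : IsSelfAdjoint P₂ ∧ P₂ * P₂ = P₂) (h₃ : IsSelfAdjoint P₃ ∧ P₃ * P₃ = P₃)
    (horth : P₀ * P₁ = 0 ∧ P₀ * P₂ = 0 ∧ P₀ * P₃ = 0 ∧
      P₁ * P₂ = 0 ∧ P₁ * P₃ = 0 ∧ P₂ * P₃ = 0)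
    (hsum : P₀ + P₁ + P₂ + P₃ = 1) (hP₂ : P₂ ≠ 0) (hP₃ : P₃ ≠ 0)
    (lam mu : ℝ) (hlam : 0 < lam ∧ lam < 1) (hmu : 0 < mu ∧ mu < 1) (hne : lam ≠ mu)
    (A : H →L[ℂ] H) (hA : A = P₁ + (lam : ℂ) • P₂ + (mu : ℂ) • P₃) :
    ((∃ C : H →L[ℂ] H, IsGLBWithinEffects A (1 - A) C) ↔
      ((lam ≤ 1 / 2 ∧ mu ≤ 1 / 2) ∨ (1 / 2 ≤ lam ∧ 1 / 2 ≤ mu))) ∧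
    (∀ C : H →L[ℂ] H, IsGLBWithinEffects A (1 - A) C →
      (lam ≤ 1 / 2 ∧ mu ≤ 1 / 2 → C = (lam : ℂ) • P₂ + (mu : ℂ) • P₃) ∧
      (1 / 2 ≤ lam ∧ 1 / 2 ≤ mu →
        C = ((1 - lam : ℝ) : ℂ) • P₂ + ((1 - mu : ℝ) : ℂ) • P₃)) := by
  obtain ⟨hl0, hl1⟩ := hlam
  obtain ⟨hm0, hm1⟩ := hmu
  obtain ⟨o01, o02, o03, o12, o13, o23⟩ := horth
  have o10 : P₁ * P₀ = 0 := orth_rev h₀.1 h₁.1 o01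
  have o20 : P₂ * P₀ = 0 := orth_rev h₀.1 h₂.1 o02
  have o30 : P₃ * P₀ = 0 := orth_rev h₀.1 h₃.1 o03
  have o21 : P₂ * P₁ = 0 := orth_rev h₁.1 h₂.1 o12
  have o31 : P₃ * P₁ = 0 := orth_rev h₁.1 h₃.1 o13
  have o32 : P₃ * P₂ = 0 := orth_rev h₂.1 h₃.1 o23
  have hsetup : MySetup P₀ P₁ P₂ P₃ :=
    ⟨h₀.1, h₀.2, h₁.1, h₁.2, h₂.1, h₂.2, h₃.1, h₃.2,
      o01, o02, o03, o10, o12, o13, o20, o21, o23, o30, o31, o32, hsum⟩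
  have hsetupBA : MySetup P₁ P₀ P₂ P₃ :=
    ⟨h₁.1, h₁.2, h₀.1, h₀.2, h₂.1, h₂.2, h₃.1, h₃.2,
      o10, o12, o13, o01, o02, o03, o21, o20, o23, o31, o30, o32,
      by rw [← hsum]; abel⟩
  have hsetup23 : MySetup P₀ P₁ P₃ P₂ :=
    ⟨h₀.1, h₀.2, h₁.1, h₁.2, h₃.1, h₃.2, h₂.1, h₂.2,
      o01, o03, o02, o10, o13, o12, o30, o31, o32, o20, o21, o23,
      by rw [← hsum]; abel⟩
  have hA' : (1 : H →L[ℂ] H) - A = P₀ + ((1-lam : ℝ):ℂ) • P₂ + ((1-mu : ℝ):ℂ) • P₃ := by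
    rw [hA, ← hsum]
    push_cast
    module
  have hA23 : A = P₁ + (mu:ℂ) • P₃ + (lam:ℂ) • P₂ := by
    rw [hA]; module
  constructor
  · constructor
    · rintro ⟨C, hC⟩
      rcases le_or_gt lam (1/2) with hll | hll
      · rcases le_or_gt mu (1/2) with hmm | hmm
        · exact Or.inl ⟨hll, hmm⟩
        · rcases eq_or_lt_of_le hll with heq | hlt
          · exact Or.inr ⟨le_of_eq heq.symm, le_of_lt hmm⟩
          · exact absurd ⟨C, hC⟩ (aux_nonexist hsetup hP₂ hP₃ hl0 hm1 hlt hmm hA)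
      · rcases le_or_gt mu (1/2) with hmm | hmm
        · rcases eq_or_lt_of_le hmm with heq | hmt
          · exact Or.inr ⟨le_of_lt hll, le_of_eq heq.symm⟩
          · exact absurd ⟨C, hC⟩ (aux_nonexist hsetup23 hP₃ hP₂ hm0 hl1 hmt hll hA23)
        · exact Or.inr ⟨le_of_lt hll, le_of_lt hmm⟩
    · rintro (⟨hll, hmm⟩ | ⟨hll, hmm⟩)
      · exact ⟨_, aux_exists hsetup hl0 hll hm0 hmm hA⟩
      · have hex := aux_exists hsetupBA (show (0:ℝ) < 1-lam by linarith)
          (show (1:ℝ)-lam ≤ 1/2 by linarith) (show (0:ℝ) < 1-mu by linarith)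
          (show (1:ℝ)-mu ≤ 1/2 by linarith) hA'
        rw [sub_sub_cancel] at hex
        exact ⟨_, glb_comm hex⟩
  · intro C hC
    constructor
    · rintro ⟨hll, hmm⟩
      have hg := aux_exists hsetup hl0 hll hm0 hmm hA
      exact le_antisymm (hg.2.2.2 C hC.1.1 hC.1.2 hC.2.1 hC.2.2.1)
        (hC.2.2.2 _ hg.1.1 hg.1.2 hg.2.1 hg.2.2.1)
    · rintro ⟨hll, hmm⟩
      have hex := aux_exists hsetupBA (show (0:ℝ) < 1-lam by linarith)
        (show (1:ℝ)-lam ≤ 1/2 by linarith) (show (0:ℝ) < 1-mu by linarith)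
        (show (1:ℝ)-mu ≤ 1/2 by linarith) hA'
      rw [sub_sub_cancel] at hex
      have hg := glb_comm hex
      exact le_antisymm (hg.2.2.2 C hC.1.1 hC.1.2 hC.2.1 hC.2.2.1)
        (hC.2.2.2 _ hg.1.1 hg.1.2 hg.2.1 hg.2.2.1)
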